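/- Let 0 < ε < 1, n ≥ 1 a natural number, w > 0 a real. Let S be a finite set with nonnegative weights wt(i), set wt''(i) = ⌈n·wt(i)/(ε·w)⌉. If |S| ≤ n and n(1−2ε)/ε ≤ Σ_{i∈S} wt''(i) ≤ n(1+2ε)/ε + 1, then (1−3ε)·w ≤ Σ_{i∈S} wt(i) ≤ (1+3ε)·w. -/

import Mathlib

/-!
Write `x i = n·wt(i)/(ε·w)`, so that `∑ x i = n·T/(ε·w)` with `T = ∑ wt(i)`. Rounding each `x i` up
costs less than one, hence the rounded sum lies in `[n·T/(ε·w), n·T/(ε·w) + n]` since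
`|S| ≤ n`. Solving the two resulting inequalities for `T`, the additive error `n` (resp. `1`)
turns into `ε·w` (resp. `ε·w/n ≤ ε·w`), which moves `2ε` to `3ε`.
-/

open Finset

namespace Finset

variable {ι : Type*} (s : Finset ι) (f : ι → ℝ)

theorem sum_le_sum_ceil : ∑ i ∈ s, f i ≤ ((∑ i ∈ s, ⌈f i⌉ : ℤ) : ℝ) := by
  push_cast
  exact sum_le_sum fun i _ => Int.le_ceil (f i)

theorem sum_ceil_le_sum_add_card : ((∑ i ∈ s, ⌈f i⌉ : ℤ) : ℝ) ≤ ∑ i ∈ s, f i + #s := by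
  push_cast
  calc ∑ i ∈ s, (⌈f i⌉ : ℝ) ≤ ∑ i ∈ s, (f i + 1) := sum_le_sum fun i _ => (Int.ceil_lt_add_one _).le
    _ = ∑ i ∈ s, f i + #s := by rw [sum_add_distrib, sum_const, nsmul_one]

end Finset

section RescaledBounds

variable {ε w T : ℝ} {n : ℕ}

theorem le_of_rescaled_ge (hε : 0 < ε) (hn : 0 < n) (hw : 0 < w)
    (h : n * (1 - 2 * ε) / ε ≤ n * T / (ε * w) + n) : (1 - 3 * ε) * w ≤ T := by
  have hn' : (0 : ℝ) < n := by exact_mod_cast hn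
  calc (1 - 3 * ε) * w = (n * (1 - 2 * ε) / ε - n) * (ε * w) / n := by field_simp; ring
    _ ≤ n * T / (ε * w) * (ε * w) / n := by gcongr; linarith
    _ = T := by field_simp

theorem le_of_rescaled_le (hε : 0 < ε) (hn : 1 ≤ n) (hw : 0 < w)
    (h : n * T / (ε * w) ≤ n * (1 + 2 * ε) / ε + 1) : T ≤ (1 + 3 * ε) * w := by
  have hn' : (1 : ℝ) ≤ n := by exact_mod_cast hn
  have hT : T ≤ (1 + 2 * ε) * w + ε * w / n := by
    calc T = n * T / (ε * w) * (ε * w) / n := by field_simp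
      _ ≤ (n * (1 + 2 * ε) / ε + 1) * (ε * w) / n := by gcongr
      _ = (1 + 2 * ε) * w + ε * w / n := by field_simp
  have : ε * w / n ≤ ε * w := div_le_self (by positivity) hn'
  linarith

end RescaledBounds

theorem weight_from_rounded_range_general {α : Type*}
    (ε : ℝ) (hε : 0 < ε) (n : ℕ) (hn : 1 ≤ n) (w : ℝ) (hw : 0 < w)
    (S : Finset α) (wt : α → ℝ)
    (hcard : S.card ≤ n)
    (hlo : (n : ℝ) * (1 - 2 * ε) / ε ≤ ((∑ i ∈ S, ⌈(n : ℝ) * wt i / (ε * w)⌉ : ℤ) : ℝ))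
    (hhi : ((∑ i ∈ S, ⌈(n : ℝ) * wt i / (ε * w)⌉ : ℤ) : ℝ) ≤ (n : ℝ) * (1 + 2 * ε) / ε + 1) :
    (1 - 3 * ε) * w ≤ (∑ i ∈ S, wt i) ∧ (∑ i ∈ S, wt i) ≤ (1 + 3 * ε) * w := by
  have hsum : ∑ i ∈ S, (n : ℝ) * wt i / (ε * w) = n * (∑ i ∈ S, wt i) / (ε * w) := by
    rw [← sum_div, mul_sum]
  have hceil_ge := S.sum_le_sum_ceil fun i => (n : ℝ) * wt i / (ε * w)
  have hceil_le := S.sum_ceil_le_sum_add_card fun i => (n : ℝ) * wt i / (ε * w)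
  have hcard' : (#S : ℝ) ≤ n := by exact_mod_cast hcard
  rw [hsum] at hceil_ge hceil_le
  exact ⟨le_of_rescaled_ge hε hn hw (by linarith), le_of_rescaled_le hε hn hw (by linarith)⟩

theorem weight_from_rounded_range {α : Type*} [DecidableEq α]
    (ε : ℝ) (hε : 0 < ε) (hε1 : ε < 1) (n : ℕ) (hn : 1 ≤ n) (w : ℝ) (hw : 0 < w)
    (S : Finset α) (wt : α → ℝ) (hwt : ∀ i ∈ S, 0 ≤ wt i)
    (hcard : S.card ≤ n)
    (hlo : (n : ℝ) * (1 - 2 * ε) / ε ≤ ((∑ i ∈ S, ⌈(n : ℝ) * wt i / (ε * w)⌉ : ℤ) : ℝ))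
    (hhi : ((∑ i ∈ S, ⌈(n : ℝ) * wt i / (ε * w)⌉ : ℤ) : ℝ) ≤ (n : ℝ) * (1 + 2 * ε) / ε + 1) :
    (1 - 3 * ε) * w ≤ (∑ i ∈ S, wt i) ∧ (∑ i ∈ S, wt i) ≤ (1 + 3 * ε) * w :=
  weight_from_rounded_range_general ε hε n hn w hw S wt hcard hlo hhi
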